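/- Let S ⊆ ℝ^d be a nonempty closed set with 0 ∈ S and t·S ⊆ S for all t > 0, and let A_S be the associated envelope function. Then there exists a constant C > 0 such that for every h ∈ GL(d,ℝ) satisfying ‖h − I‖ < 1/2 (operator norm) and hᵀS ⊆ S, and for every ξ ∈ ℝ^d: A_S(hᵀξ) ≤ C · A_S(ξ). -/

import Mathlib

open MeasureTheory Matrix Metric

noncomputable section

variable {n : Type*} [Fintype n] [DecidableEq n]

/-- The dual action `ξ ↦ hᵀ ξ` of a matrix on Euclidean space. -/
def dualAct (h : Matrix n n ℝ) (ξ : EuclideanSpace ℝ n) : EuclideanSpace ℝ n :=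
  (EuclideanSpace.equiv n ℝ).symm (h.transpose.mulVec (EuclideanSpace.equiv n ℝ ξ))

/-- The envelope function `A_S` of a set `S` (with respect to Euclidean norm and distance). -/
def env (S : Set (EuclideanSpace ℝ n)) (ξ : EuclideanSpace ℝ n) : ℝ :=
  min (infDist ξ S / (1 + Real.sqrt (‖ξ‖ ^ 2 - infDist ξ S ^ 2))) (1 / (1 + ‖ξ‖))

/-- The Euclidean operator norm of a matrix. -/
def opNorm (m : Matrix n n ℝ) : ℝ :=
  ‖LinearMap.toContinuousLinearMap (Matrix.toEuclideanLin m)‖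

/-- The dual orbit of `ξ₀` under a subgroup `H ≤ GL(d,ℝ)`. -/
def dualOrbit (H : Subgroup (GL n ℝ)) (ξ₀ : EuclideanSpace ℝ n) : Set (EuclideanSpace ℝ n) :=
  {ξ | ∃ h : GL n ℝ, h ∈ H ∧ dualAct (↑h) ξ₀ = ξ}

/-- The envelope function pulled back to the group: `A_H(h) = A_𝒪(hᵀ ξ₀)`. -/
def AH (H : Subgroup (GL n ℝ)) (ξ₀ : EuclideanSpace ℝ n) (h : ↥H) : ℝ :=
  env (dualOrbit H ξ₀)ᶜ (dualAct (↑(h : GL n ℝ)) ξ₀)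

end

/-!
Since `‖h - I‖ < 1/2`, the map `hᵀ` moves every `ξ` by at most `|ξ|/2`; hence `|ξ| ≤ 2|hᵀξ|`, and
`hᵀ` is `2`-Lipschitz, so that `hᵀS ⊆ S` gives `dist(hᵀξ, S) ≤ 2 dist(ξ, S)`. The envelope
function depends only on `a = dist(ξ, S)` and `r = |ξ|`, and an elementary case analysis (which
term realises the minimum, and whether `√(r² - a²)` is large compared with `a`) shows that it
grows by at most a bounded factor when `a` grows and `r` shrinks by bounded factors.
-/

open scoped NNReal Matrix.Norms.L2Operator

theorem Metric.infDist_le_mul_infDist_of_mapsTo {α β : Type*} [PseudoMetricSpace α]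
    [PseudoMetricSpace β] {f : α → β} {K : ℝ≥0} (hf : LipschitzWith K f) {s : Set α}
    {t : Set β} (hst : Set.MapsTo f s t) (hs : s.Nonempty) (x : α) :
    infDist (f x) t ≤ K * infDist x s := by
  have : Nonempty s := hs.to_subtype
  rw [infDist_eq_iInf (x := x), Real.mul_iInf_of_nonneg K.coe_nonneg]
  exact le_ciInf fun y => (infDist_le_dist_of_mem (hst y.2)).trans (hf.dist_le_mul x y)

section DualAction

variable {n : Type*} [Fintype n] [DecidableEq n]

theorem dualAct_eq_toEuclideanCLM (m : Matrix n n ℝ) :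
    dualAct m = toEuclideanCLM (𝕜 := ℝ) m.transpose := rfl

theorem opNorm_eq_norm (m : Matrix n n ℝ) : opNorm m = ‖m‖ := rfl

theorem dualAct_sub (m : Matrix n n ℝ) (x y : EuclideanSpace ℝ n) :
    dualAct m (x - y) = dualAct m x - dualAct m y :=
  map_sub (toEuclideanCLM (𝕜 := ℝ) m.transpose) x y

theorem dualAct_sub_one_apply (m : Matrix n n ℝ) (x : EuclideanSpace ℝ n) :
    dualAct (m - 1) x = dualAct m x - x := by
  rw [dualAct_eq_toEuclideanCLM, transpose_sub, transpose_one, map_sub, map_one]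
  rfl

theorem norm_dualAct_le (m : Matrix n n ℝ) (x : EuclideanSpace ℝ n) :
    ‖dualAct m x‖ ≤ opNorm m * ‖x‖ := by
  rw [opNorm_eq_norm, ← l2_opNorm_conjTranspose, conjTranspose_eq_transpose_of_trivial]
  exact l2_opNorm_mulVec m.transpose x

theorem norm_dualAct_sub_self_le (m : Matrix n n ℝ) (x : EuclideanSpace ℝ n) :
    ‖dualAct m x - x‖ ≤ opNorm (m - 1) * ‖x‖ := by
  rw [← dualAct_sub_one_apply]
  exact norm_dualAct_le (m - 1) x

theorem norm_dualAct_le_of_opNorm_sub_one_le {m : Matrix n n ℝ} {ε : ℝ}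
    (hm : opNorm (m - 1) ≤ ε) (x : EuclideanSpace ℝ n) : ‖dualAct m x‖ ≤ (1 + ε) * ‖x‖ := by
  have hx := (norm_dualAct_sub_self_le m x).trans (mul_le_mul_of_nonneg_right hm (norm_nonneg x))
  have := norm_le_insert' (dualAct m x) x
  linarith

theorem mul_norm_le_norm_dualAct_of_opNorm_sub_one_le {m : Matrix n n ℝ} {ε : ℝ}
    (hm : opNorm (m - 1) ≤ ε) (x : EuclideanSpace ℝ n) : (1 - ε) * ‖x‖ ≤ ‖dualAct m x‖ := by
  have hx := (norm_dualAct_sub_self_le m x).trans (mul_le_mul_of_nonneg_right hm (norm_nonneg x))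
  have := norm_le_insert' x (dualAct m x)
  rw [norm_sub_rev] at this
  linarith

theorem lipschitzWith_dualAct_of_opNorm_sub_one_le {m : Matrix n n ℝ} {ε : ℝ≥0}
    (hm : opNorm (m - 1) ≤ ε) : LipschitzWith (1 + ε) (dualAct m) := by
  refine LipschitzWith.of_dist_le_mul fun x y => ?_
  rw [dist_eq_norm, dist_eq_norm, ← dualAct_sub, NNReal.coe_add, NNReal.coe_one]
  exact norm_dualAct_le_of_opNorm_sub_one_le hm (x - y)

end DualAction

noncomputable def envProfile (a r : ℝ) : ℝ := min (a / (1 + √(r ^ 2 - a ^ 2))) (1 / (1 + r))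

theorem env_eq_envProfile {n : Type*} [Fintype n] (S : Set (EuclideanSpace ℝ n))
    (ξ : EuclideanSpace ℝ n) : env S ξ = envProfile (infDist ξ S) ‖ξ‖ := rfl

theorem div_two_mul_le_sqrt_sq_sub_sq {K a b r ρ : ℝ} (hK : 0 < K) (hb : 0 ≤ b) (ha : 0 ≤ a)
    (har : a ≤ r) (hba : b ≤ K * a) (hrρ : r ≤ K * ρ) (hlarge : 2 * K ^ 2 * a ≤ √(r ^ 2 - a ^ 2)) :
    √(r ^ 2 - a ^ 2) / (2 * K) ≤ √(ρ ^ 2 - b ^ 2) := by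
  refine Real.le_sqrt_of_sq_le ?_
  have hPsq : √(r ^ 2 - a ^ 2) ^ 2 = r ^ 2 - a ^ 2 := Real.sq_sqrt (by nlinarith)
  have hr2 : r ^ 2 ≤ K ^ 2 * ρ ^ 2 := by rw [← mul_pow]; gcongr; linarith
  have hb2 : b ^ 2 ≤ K ^ 2 * a ^ 2 := by rw [← mul_pow]; gcongr
  have ha2 : (2 * K ^ 2 * a) ^ 2 ≤ √(r ^ 2 - a ^ 2) ^ 2 := by gcongr
  rw [div_pow, div_le_iff₀ (by positivity)]
  nlinarith [mul_le_mul_of_nonneg_left hb2 (sq_nonneg K)]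

theorem envProfile_le_mul_envProfile {K a b r ρ : ℝ} (hK : 1 ≤ K) (hb : 0 ≤ b) (har : a ≤ r)
    (hba : b ≤ K * a) (hrρ : r ≤ K * ρ) :
    envProfile b ρ ≤ K * (1 + 2 * K ^ 2) * envProfile a r := by
  have ha : 0 ≤ a := by nlinarith
  have hr : 0 ≤ r := ha.trans har
  have hρ : 0 ≤ ρ := by nlinarith
  set P := √(r ^ 2 - a ^ 2)
  set Q := √(ρ ^ 2 - b ^ 2)
  have hP : 0 ≤ P := Real.sqrt_nonneg _
  have hQ : 0 ≤ Q := Real.sqrt_nonneg _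
  have hPr : P ≤ r := Real.sqrt_le_iff.2 ⟨hr, by nlinarith⟩
  unfold envProfile
  rcases le_total (1 / (1 + r)) (a / (1 + P)) with hfar | hnear
  · rw [min_eq_right hfar]
    calc min (b / (1 + Q)) (1 / (1 + ρ)) ≤ 1 / (1 + ρ) := min_le_right _ _
      _ ≤ K / (1 + r) := by rw [div_le_div_iff₀ (by positivity) (by positivity)]; nlinarith
      _ ≤ K * (1 + 2 * K ^ 2) * (1 / (1 + r)) := by rw [mul_one_div]; gcongr; nlinarith
  rw [min_eq_left hnear]
  refine (min_le_left _ _).trans ?_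
  rcases le_total (2 * K ^ 2 * a) P with hlarge | hsmall
  · have hQP : P / (2 * K) ≤ Q :=
      div_two_mul_le_sqrt_sq_sub_sq (by linarith) hb ha har hba hrρ hlarge
    calc b / (1 + Q) ≤ K * a / (1 + P / (2 * K)) := by gcongr
      _ = 2 * K ^ 2 * a / (2 * K + P) := by field_simp
      _ ≤ 2 * K ^ 2 * a / (1 + P) :=
        div_le_div_of_nonneg_left (by positivity) (by positivity) (by linarith)
      _ ≤ K * (1 + 2 * K ^ 2) * (a / (1 + P)) := by
        rw [← mul_div_assoc]
        exact div_le_div_of_nonneg_right (mul_le_mul_of_nonneg_right (by nlinarith) ha)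
          (by positivity)
  · have ha1 : a ≤ 1 := by
      rw [div_le_div_iff₀ (by positivity) (by positivity)] at hnear
      nlinarith
    have hP2 : P ≤ 2 * K ^ 2 := by nlinarith
    calc b / (1 + Q) ≤ b := div_le_self hb (by linarith)
      _ ≤ K * a := hba
      _ ≤ K * (1 + 2 * K ^ 2) * (a / (1 + P)) := by
        rw [← mul_div_assoc, le_div_iff₀ (by positivity)]
        nlinarith [mul_le_mul_of_nonneg_left hP2 (by positivity : 0 ≤ K * a)]

theorem stmt7 (d : ℕ) (S : Set (EuclideanSpace ℝ (Fin d)))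
    (hSne : S.Nonempty)
    (h0S : (0 : EuclideanSpace ℝ (Fin d)) ∈ S) :
    ∃ C : ℝ, 0 < C ∧ ∀ h : GL (Fin d) ℝ,
      opNorm ((↑h : Matrix (Fin d) (Fin d) ℝ) - 1) < 1 / 2 →
      (∀ ξ ∈ S, dualAct (↑h) ξ ∈ S) →
      ∀ ξ : EuclideanSpace ℝ (Fin d), env S (dualAct (↑h) ξ) ≤ C * env S ξ := by
  refine ⟨2 * (1 + 2 * 2 ^ 2), by norm_num, fun h hh hS ξ => ?_⟩
  have hLip := lipschitzWith_dualAct_of_opNorm_sub_one_le (ε := 1) (hh.le.trans (by norm_num))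
  have hdist : infDist (dualAct h ξ) S ≤ 2 * infDist ξ S := by
    simpa [one_add_one_eq_two] using infDist_le_mul_infDist_of_mapsTo hLip hS hSne ξ
  have hnorm : ‖ξ‖ ≤ 2 * ‖dualAct h ξ‖ := by
    linarith [mul_norm_le_norm_dualAct_of_opNorm_sub_one_le hh.le ξ]
  have hξ : infDist ξ S ≤ ‖ξ‖ := by simpa using infDist_le_dist_of_mem (x := ξ) h0S
  rw [env_eq_envProfile, env_eq_envProfile]
  exact envProfile_le_mul_envProfile one_le_two infDist_nonneg hξ hdist hnorm
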